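/- arXiv:2505.02495 — 3 statements merged into one kernel-verified Lean document; each statement's English description precedes it below -/
import Mathlib

section
/- Let J ∈ \mathbb{R}^{n×n}, let E ⊆ \mathbb{R}^n be a subspace with orthogonal projection P_E, let C ∈ \mathbb{R}^{n×p}. Suppose: (i) Jᵀ d = d for all d ∈ null(Cᵀ) ∩ E; (ii) J C = 0; (iii) J w = w for all w ∈ E^⊥; (iv) Jᵀ d ∈ null(Cᵀ) for all d ∈ \mathbb{R}^n; (v) J E^⊥ ⊆ E^⊥ and J(range(C)) = {0}. Then P_E J² = P_E J. -/
/-! Since `J` preserves `Eᗮ`, its adjoint preserves `E`, so by (i) and (iv) `Jᵀ` is idempotent on `E`.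
Hence `J² v - J v` is orthogonal to `E`, being paired with `e ∈ E` against `(Jᵀ)² e - Jᵀ e = 0`. -/

open Module End

theorem Submodule.orthogonalProjectionOnto_apply_eq_of_adjoint_eqOn {𝕜 V : Type*} [RCLike 𝕜]
    [NormedAddCommGroup V] [InnerProductSpace 𝕜 V] [FiniteDimensional 𝕜 V]
    {K : Submodule 𝕜 V} {A B : V →ₗ[𝕜] V}
    (h : ∀ e ∈ K, LinearMap.adjoint A e = LinearMap.adjoint B e) (v : V) :
    K.orthogonalProjectionOnto (A v) = K.orthogonalProjectionOnto (B v) := by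
  have hsub : A v - B v ∈ Kᗮ := by
    refine K.sub_mem_orthogonal_of_inner_right fun e => ?_
    rw [← LinearMap.adjoint_inner_left, ← LinearMap.adjoint_inner_left, h e e.2]
  rw [← sub_eq_zero, ← map_sub]
  exact K.orthogonalProjectionOnto_apply_of_mem_orthogonal hsub

theorem stmt_7_general {n p : ℕ}
    (J : EuclideanSpace ℝ (Fin n) →ₗ[ℝ] EuclideanSpace ℝ (Fin n))
    (C : EuclideanSpace ℝ (Fin p) →ₗ[ℝ] EuclideanSpace ℝ (Fin n))
    (E : Submodule ℝ (EuclideanSpace ℝ (Fin n)))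
    -- (i) Jᵀ d = d for all d ∈ null(Cᵀ) ∩ E
    (h1 : ∀ d, LinearMap.adjoint C d = 0 → d ∈ E → LinearMap.adjoint J d = d)
    -- (iv) Jᵀ d ∈ null(Cᵀ) for all d
    (h4 : ∀ d, LinearMap.adjoint C (LinearMap.adjoint J d) = 0)
    -- (v) J Eᗮ ⊆ Eᗮ and J (range C) = {0}
    (h5 : (∀ w ∈ Eᗮ, J w ∈ Eᗮ) ∧ ∀ u ∈ LinearMap.range C, J u = 0) :
    ∀ v, E.orthogonalProjectionOnto (J (J v)) = E.orthogonalProjectionOnto (J v) := by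
  have hE : E ∈ invtSubmodule (LinearMap.adjoint J) :=
    mem_invtSubmodule_adjoint_iff.mpr ((mem_invtSubmodule_iff_forall_mem_of_mem _).mpr h5.1)
  refine E.orthogonalProjectionOnto_apply_eq_of_adjoint_eqOn (A := J ∘ₗ J) fun e he => ?_
  rw [LinearMap.adjoint_comp]
  exact h1 _ (h4 e) (hE he)

/-- Abstract form of Lemma 3.5 (idempotency on `E`): with `J = ∇A(x)`,
`C = ∇c(x)`, `E` the direction subspace of `aff(X)` and `P_E` the orthogonal
projection onto `E`, the stated hypotheses give `P_E J² = P_E J`. -/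
theorem stmt_7 {n p : ℕ}
    (J : EuclideanSpace ℝ (Fin n) →ₗ[ℝ] EuclideanSpace ℝ (Fin n))
    (C : EuclideanSpace ℝ (Fin p) →ₗ[ℝ] EuclideanSpace ℝ (Fin n))
    (E : Submodule ℝ (EuclideanSpace ℝ (Fin n)))
    -- (i) Jᵀ d = d for all d ∈ null(Cᵀ) ∩ E
    (h1 : ∀ d, LinearMap.adjoint C d = 0 → d ∈ E → LinearMap.adjoint J d = d)
    -- (ii) J C = 0
    (h2 : ∀ w, J (C w) = 0)
    -- (iii) J w = w for all w ∈ Eᗮ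
    (h3 : ∀ w ∈ Eᗮ, J w = w)
    -- (iv) Jᵀ d ∈ null(Cᵀ) for all d
    (h4 : ∀ d, LinearMap.adjoint C (LinearMap.adjoint J d) = 0)
    -- (v) J Eᗮ ⊆ Eᗮ and J (range C) = {0}
    (h5 : (∀ w ∈ Eᗮ, J w ∈ Eᗮ) ∧ ∀ u ∈ LinearMap.range C, J u = 0) :
    ∀ v, E.orthogonalProjectionOnto (J (J v)) = E.orthogonalProjectionOnto (J v) :=
  stmt_7_general J C E h1 h4 h5
end

section
/- Let J ∈ \mathbb{R}^{n×n}, C ∈ \mathbb{R}^{n×p}, E ⊆ \mathbb{R}^n a subspace, and N ⊆ \mathbb{R}^n a closed convex cone with lin(N) = E^⊥. Suppose J C = 0, J w = w for all w ∈ N, and Jᵀ d = d for all d ∈ null(Cᵀ) ∩ E, and Jᵀ(\mathbb{R}^n) ⊆ null(Cᵀ). Then for d ∈ \mathbb{R}^n: 0 ∈ J d + N if and only if 0 ∈ d + range(C) + N. -/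
/-!
Let `F = ker Cᵀ ∩ E`, so that `Fᗮ = range C + Eᗮ`. Since `Jᵀ` fixes `F` pointwise, `x - J x ∈ Fᗮ`
for every `x`. If `J d + v = 0` with `v ∈ N`, then `J (-d) = v`, so `-d - v = c + e` with
`c ∈ range C` and `e ∈ Eᗮ = lin N ⊆ N`, and `v + e ∈ N` because `N` is a convex cone. Conversely,
applying `J` to `d + C y + v = 0` kills `C y` and fixes `v`.
-/

theorem Convex.add_mem_of_smul_mem {𝕜 V : Type*} [Field 𝕜] [LinearOrder 𝕜] [IsStrictOrderedRing 𝕜]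
    [AddCommGroup V] [Module 𝕜 V] {s : Set V} (hs : Convex 𝕜 s)
    (hcone : ∀ t : 𝕜, 0 ≤ t → ∀ v ∈ s, t • v ∈ s) {v w : V} (hv : v ∈ s) (hw : w ∈ s) :
    v + w ∈ s := by
  have hhalf : (0 : 𝕜) ≤ 2⁻¹ := by positivity
  have hmid := hs hv hw hhalf hhalf (by rw [← two_mul, mul_inv_cancel₀ two_ne_zero])
  have htwo : (2 : 𝕜) • ((2⁻¹ : 𝕜) • v + (2⁻¹ : 𝕜) • w) = v + w := by
    rw [smul_add, smul_smul, smul_smul, mul_inv_cancel₀ two_ne_zero, one_smul, one_smul]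
  exact htwo ▸ hcone 2 zero_le_two _ hmid

namespace LinearMap

variable {V W : Type*} [NormedAddCommGroup V] [InnerProductSpace ℝ V] [FiniteDimensional ℝ V]
  [NormedAddCommGroup W] [InnerProductSpace ℝ W] [FiniteDimensional ℝ W]

theorem orthogonal_ker_adjoint_inf (C : W →ₗ[ℝ] V) (K : Submodule ℝ V) :
    (ker (adjoint C) ⊓ K)ᗮ = range C ⊔ Kᗮ := by
  rw [← orthogonal_range, ← Submodule.orthogonal_orthogonal K, Submodule.inf_orthogonal,
    Submodule.orthogonal_orthogonal, Submodule.orthogonal_orthogonal]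

theorem sub_apply_mem_orthogonal_of_adjoint_fix (J : V →ₗ[ℝ] V) {F : Submodule ℝ V}
    (hJ : ∀ u ∈ F, adjoint J u = u) (x : V) : x - J x ∈ Fᗮ := by
  rw [Submodule.mem_orthogonal]
  intro u hu
  rw [inner_sub_right, ← adjoint_inner_left, hJ u hu, sub_self]

end LinearMap

theorem stmt_8_general {n p : ℕ}
    (J : EuclideanSpace ℝ (Fin n) →ₗ[ℝ] EuclideanSpace ℝ (Fin n))
    (C : EuclideanSpace ℝ (Fin p) →ₗ[ℝ] EuclideanSpace ℝ (Fin n))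
    (E : Submodule ℝ (EuclideanSpace ℝ (Fin n)))
    (N : Set (EuclideanSpace ℝ (Fin n)))
    (hNconv : Convex ℝ N)
    (hNcone : ∀ t : ℝ, 0 ≤ t → ∀ v ∈ N, t • v ∈ N)
    (hlinN : N ∩ (-N) = (Eᗮ : Set (EuclideanSpace ℝ (Fin n))))
    (hJC : ∀ w, J (C w) = 0)
    (hJN : ∀ w ∈ N, J w = w)
    (hJadj : ∀ d, LinearMap.adjoint C d = 0 → d ∈ E → LinearMap.adjoint J d = d) :
    ∀ d, (∃ v ∈ N, J d + v = 0) ↔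
      (∃ w ∈ LinearMap.range C, ∃ v ∈ N, d + w + v = 0) := by
  intro d
  constructor
  · rintro ⟨v, hv, hJdv⟩
    have hJd : J (-d) = v := by rw [map_neg, neg_eq_iff_eq_neg, eq_neg_of_add_eq_zero_left hJdv]
    have hsplit := J.sub_apply_mem_orthogonal_of_adjoint_fix
      (F := LinearMap.ker (LinearMap.adjoint C) ⊓ E) (fun u hu => hJadj u hu.1 hu.2) (-d)
    rw [LinearMap.orthogonal_ker_adjoint_inf, hJd, Submodule.mem_sup] at hsplit
    obtain ⟨c, hc, e, he, hce⟩ := hsplit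
    have heN : e ∈ N := (hlinN.symm ▸ he : e ∈ N ∩ (-N)).1
    refine ⟨c, hc, v + e, hNconv.add_mem_of_smul_mem hNcone hv heN, ?_⟩
    rw [show d + c + (v + e) = d + v + (c + e) by abel, hce]
    abel
  · rintro ⟨_, ⟨y, rfl⟩, v, hv, h⟩
    refine ⟨v, hv, ?_⟩
    simpa only [map_add, map_zero, hJC y, hJN v hv, add_zero] using congrArg J h

/-- Abstract form of Lemma 3.4: with `J = ∇A(x)`, `C = ∇c(x)`, `N = N_X(x)` a closed
convex cone with `lin(N) = N ∩ (-N) = Eᗮ`, and the stated hypotheses,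
`0 ∈ J d + N` iff `0 ∈ d + range(C) + N`. -/
theorem stmt_8 {n p : ℕ}
    (J : EuclideanSpace ℝ (Fin n) →ₗ[ℝ] EuclideanSpace ℝ (Fin n))
    (C : EuclideanSpace ℝ (Fin p) →ₗ[ℝ] EuclideanSpace ℝ (Fin n))
    (E : Submodule ℝ (EuclideanSpace ℝ (Fin n)))
    (N : Set (EuclideanSpace ℝ (Fin n)))
    (hNcl : IsClosed N) (hNconv : Convex ℝ N)
    (hNcone : ∀ t : ℝ, 0 ≤ t → ∀ v ∈ N, t • v ∈ N)
    (hlinN : N ∩ (-N) = (Eᗮ : Set (EuclideanSpace ℝ (Fin n))))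
    (hJC : ∀ w, J (C w) = 0)
    (hJN : ∀ w ∈ N, J w = w)
    (hJadj : ∀ d, LinearMap.adjoint C d = 0 → d ∈ E → LinearMap.adjoint J d = d)
    (hJrange : ∀ d, LinearMap.adjoint C (LinearMap.adjoint J d) = 0) :
    ∀ d, (∃ v ∈ N, J d + v = 0) ↔
      (∃ w ∈ LinearMap.range C, ∃ v ∈ N, d + w + v = 0) :=
  stmt_8_general J C E N hNconv hNcone hlinN hJC hJN hJadj
end

section
/- Let f be continuously differentiable on \mathbb{R}^n, A : \mathbb{R}^n → \mathbb{R}^n differentiable with A(x) = x, and c differentiable with c(x) = 0, at a point x ∈ K. Define h(y) = f(A(y)) + (β/2)‖c(y)‖². Suppose the equivalence: 0 ∈ ∇A(x)v + N_X(x) iff 0 ∈ v + range(∇c(x)) + N_X(x) holds for all v ∈ \mathbb{R}^n (as established by Lemma 3.4). Then x satisfies 0 ∈ ∇h(x) + N_X(x) if and only if 0 ∈ ∇f(x) + range(∇c(x)) + N_X(x). -/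
/-! At a feasible point the penalty gradient `β ∇c(x) c(x)` vanishes and `A(x) = x`, so
`∇h(x) = ∇A(x) ∇f(x)`; the assumed equivalence at `v = ∇f(x)` is then exactly the claim. -/

open RealInnerProductSpace

theorem HasFDerivAt.norm_sq_of_eq_zero {E F : Type*} [NormedAddCommGroup E] [NormedSpace ℝ E]
    [NormedAddCommGroup F] [InnerProductSpace ℝ F] {c : E → F} {c' : E →L[ℝ] F} {x : E}
    (hc : HasFDerivAt c c' x) (hcx : c x = 0) :
    HasFDerivAt (‖c ·‖ ^ 2) (0 : E →L[ℝ] ℝ) x := by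
  simpa [hcx] using hc.norm_sq

section

variable {E F : Type*} [NormedAddCommGroup E] [InnerProductSpace ℝ E] [CompleteSpace E]
  [NormedAddCommGroup F] [InnerProductSpace ℝ F] {x : E}

theorem HasGradientAt.comp_hasFDerivAt [CompleteSpace F] {f : F → ℝ} {g : F}
    {A : E → F} {A' : E →L[ℝ] F} (hf : HasGradientAt f g (A x)) (hA : HasFDerivAt A A' x) :
    HasGradientAt (fun y => f (A y)) (ContinuousLinearMap.adjoint A' g) x := by
  rw [hasGradientAt_iff_hasFDerivAt]
  refine (hf.hasFDerivAt.comp x hA).congr_fderiv ?_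
  ext v
  simp [ContinuousLinearMap.adjoint_inner_left]

theorem HasGradientAt.add_mul_norm_sq_of_eq_zero {φ : E → ℝ} {g : E} {c : E → F}
    {c' : E →L[ℝ] F} (hφ : HasGradientAt φ g x) (hc : HasFDerivAt c c' x) (hcx : c x = 0)
    (β : ℝ) : HasGradientAt (fun y => φ y + β / 2 * ‖c y‖ ^ 2) g x := by
  rw [hasGradientAt_iff_hasFDerivAt]
  refine (hφ.hasFDerivAt.add ((hc.norm_sq_of_eq_zero hcx).const_mul (β / 2))).congr_fderiv ?_
  simp

end

theorem stmt_9_general {n p : ℕ} (f : EuclideanSpace ℝ (Fin n) → ℝ)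
    (A : EuclideanSpace ℝ (Fin n) → EuclideanSpace ℝ (Fin n))
    (c : EuclideanSpace ℝ (Fin n) → EuclideanSpace ℝ (Fin p))
    (hf : ContDiff ℝ 1 f) (hA : Differentiable ℝ A) (hc : Differentiable ℝ c)
    (x : EuclideanSpace ℝ (Fin n)) (hAx : A x = x) (hcx : c x = 0)
    (β : ℝ)
    (h : EuclideanSpace ℝ (Fin n) → ℝ)
    (hh : h = fun y => f (A y) + (β / 2) * ‖c y‖ ^ 2)
    (N : Set (EuclideanSpace ℝ (Fin n)))
    (hequiv : ∀ v : EuclideanSpace ℝ (Fin n),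
      (∃ u ∈ N, ContinuousLinearMap.adjoint (fderiv ℝ A x) v + u = 0) ↔
      (∃ w ∈ Set.range (ContinuousLinearMap.adjoint (fderiv ℝ c x)),
        ∃ u ∈ N, v + w + u = 0)) :
    (∃ u ∈ N, gradient h x + u = 0) ↔
      (∃ w ∈ Set.range (ContinuousLinearMap.adjoint (fderiv ℝ c x)),
        ∃ u ∈ N, gradient f x + w + u = 0) := by
  have hgrad_f : HasGradientAt f (gradient f x) (A x) := by
    rw [hAx]
    exact (hf.differentiable one_ne_zero x).hasGradientAt
  have hgrad_h :
      HasGradientAt h (ContinuousLinearMap.adjoint (fderiv ℝ A x) (gradient f x)) x := by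
    rw [hh]
    exact HasGradientAt.add_mul_norm_sq_of_eq_zero
      (hgrad_f.comp_hasFDerivAt (hA x).hasFDerivAt) (hc x).hasFDerivAt hcx β
  rw [hgrad_h.gradient]
  exact hequiv (gradient f x)

/-- Theorem 3.1: at a feasible point `x` (`c(x) = 0`, `A(x) = x`, `x ∈ X`), assuming
the equivalence of Lemma 3.4 for `∇A(x)` (the adjoint of the Fréchet derivative of `A`),
`x` is a first-order stationary point of the penalized problem
(`0 ∈ ∇h(x) + N_X(x)` with `h(y) = f(A(y)) + (β/2)‖c(y)‖²`) iff it is a first-order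
stationary point of the original problem (`0 ∈ ∇f(x) + range(∇c(x)) + N_X(x)`). -/
theorem stmt_9 {n p : ℕ} (f : EuclideanSpace ℝ (Fin n) → ℝ)
    (A : EuclideanSpace ℝ (Fin n) → EuclideanSpace ℝ (Fin n))
    (c : EuclideanSpace ℝ (Fin n) → EuclideanSpace ℝ (Fin p))
    (hf : ContDiff ℝ 1 f) (hA : Differentiable ℝ A) (hc : Differentiable ℝ c)
    (X : Set (EuclideanSpace ℝ (Fin n))) (hXcl : IsClosed X) (hXconv : Convex ℝ X)
    (x : EuclideanSpace ℝ (Fin n)) (hxX : x ∈ X) (hAx : A x = x) (hcx : c x = 0)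
    (β : ℝ)
    (h : EuclideanSpace ℝ (Fin n) → ℝ)
    (hh : h = fun y => f (A y) + (β / 2) * ‖c y‖ ^ 2)
    (N : Set (EuclideanSpace ℝ (Fin n)))
    (hN : N = {v | ∀ y ∈ X, ⟪v, y - x⟫ ≤ 0})
    (hequiv : ∀ v : EuclideanSpace ℝ (Fin n),
      (∃ u ∈ N, ContinuousLinearMap.adjoint (fderiv ℝ A x) v + u = 0) ↔
      (∃ w ∈ Set.range (ContinuousLinearMap.adjoint (fderiv ℝ c x)),
        ∃ u ∈ N, v + w + u = 0)) :
    (∃ u ∈ N, gradient h x + u = 0) ↔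
      (∃ w ∈ Set.range (ContinuousLinearMap.adjoint (fderiv ℝ c x)),
        ∃ u ∈ N, gradient f x + w + u = 0) :=
  stmt_9_general f A c hf hA hc x hAx hcx β h hh N hequiv
end
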